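/- Let n ≥ 1, let A be a Hermitian n×n complex matrix all of whose eigenvalues lie in the open interval (−1,1), let f, g ∈ 𝔥, and let X be a normal n×n complex matrix (X*X = XX*) that commutes with A (AX = XA). Then for every unitarily invariant norm N on the n×n complex matrices, N(f(A)Xg(A) + X) ≤ (2/d_A²) · N(A|X|A + |X|). -/

import Mathlib

open Matrix
open scoped ComplexOrder

/-- `f(A)` for a Hermitian matrix `A`, defined via the spectral decomposition:
`f(A) = U diag(f(λ₁),…,f(λₙ)) U*`. -/
noncomputable def herFun {n : ℕ} {A : Matrix (Fin n) (Fin n) ℂ} (hA : A.IsHermitian)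
    (f : ℂ → ℂ) : Matrix (Fin n) (Fin n) ℂ :=
  (hA.eigenvectorUnitary : Matrix (Fin n) (Fin n) ℂ) *
    Matrix.diagonal (fun i => f (hA.eigenvalues i : ℂ)) *
    star (hA.eigenvectorUnitary : Matrix (Fin n) (Fin n) ℂ)

/-- `|X| = (X*X)^{1/2}`, the positive semidefinite absolute value of a matrix. -/
noncomputable def matAbs {n : ℕ} (X : Matrix (Fin n) (Fin n) ℂ) : Matrix (Fin n) (Fin n) ℂ :=
  ((Matrix.posSemidef_conjTranspose_mul_self X).1.eigenvectorUnitary : Matrix (Fin n) (Fin n) ℂ) *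
    Matrix.diagonal ((↑) ∘ Real.sqrt ∘ (Matrix.posSemidef_conjTranspose_mul_self X).1.eigenvalues) *
    (star (Matrix.posSemidef_conjTranspose_mul_self X).1.eigenvectorUnitary : Matrix (Fin n) (Fin n) ℂ)

/-- `d_A = min { 1 - |λⱼ| }`, the distance from the unit circle to the spectrum of a
Hermitian matrix `A` whose eigenvalues lie in `(-1,1)`. -/
noncomputable def dDist {n : ℕ} {A : Matrix (Fin n) (Fin n) ℂ} (hA : A.IsHermitian) : ℝ :=
  ⨅ i, (1 - |hA.eigenvalues i|)

/-- Membership in the class `𝔥`: analytic on the open unit disk, positive real part there,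
and value `1` at the origin. -/
def MemH (f : ℂ → ℂ) : Prop :=
  DifferentiableOn ℂ f (Metric.ball (0 : ℂ) 1) ∧
    (∀ z ∈ Metric.ball (0 : ℂ) 1, 0 < (f z).re) ∧ f 0 = 1

/-- A function `N` on `n × n` complex matrices is a unitarily invariant norm. -/
def IsUnitarilyInvariantNorm {m : Type*} [Fintype m] [DecidableEq m]
    (N : Matrix m m ℂ → ℝ) : Prop :=
  (∀ X, N X = 0 ↔ X = 0) ∧
    (∀ (c : ℂ) X, N (c • X) = ‖c‖ * N X) ∧
    (∀ X Y, N (X + Y) ≤ N X + N Y) ∧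
    (∀ (U V : Matrix.unitaryGroup m ℂ) (X : Matrix m m ℂ),
      N ((U : Matrix m m ℂ) * X * (V : Matrix m m ℂ)) = N X)

/-!
A Hermitian `A` and a normal `X` commuting with it are diagonalised by one unitary `W`
(jointly diagonalise the commuting Hermitian matrices `A`, `ℜ X`, `ℑ X`); then `W` also
diagonalises `f(A)`, `g(A)` and `|X|`. Both sides become norms of `W`-conjugates of diagonal
matrices, with entries `(f(λ) g(λ) + 1) x` and `(λ² + 1) |x|`. Schwarz's lemma applied to the
Cayley transform `(f - 1) / (f + 1)` gives `|f(λ)| ≤ (1 + |λ|) / (1 - |λ|)` for `f ∈ 𝔥`, hence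
`|f(λ) g(λ) + 1| ≤ 2 (1 + λ²) / (1 - |λ|)² ≤ (2 / d_A²) (λ² + 1)`. Finally, a unitarily invariant
norm is monotone under entrywise domination of diagonal matrices, because a complex number of
modulus at most `r` is the average of two numbers of modulus `r`.
-/

open Complex Metric Set
open Module Unitary
open scoped Function ComplexStarModule

theorem Complex.exists_norm_eq_one_two_mul_eq {t : ℂ} {r : ℝ} (h : ‖t‖ ≤ r) :
    ∃ u v : ℂ, ‖u‖ = 1 ∧ ‖v‖ = 1 ∧ 2 * t = r * (u + v) := by
  obtain rfl | hr := ((norm_nonneg t).trans h).eq_or_lt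
  · exact ⟨1, -1, by simp, by simp, by simp [norm_le_zero_iff.mp h]⟩
  set θ := Real.arccos (‖t‖ / r)
  have hcos : Real.cos θ = ‖t‖ / r :=
    Real.cos_arccos (by linarith [div_nonneg (norm_nonneg t) hr.le]) (div_le_one_of_le₀ h hr.le)
  refine ⟨exp (↑(arg t + θ) * I), exp (↑(arg t - θ) * I), norm_exp_ofReal_mul_I _,
    norm_exp_ofReal_mul_I _, ?_⟩
  have hsum : exp (↑(arg t + θ) * I) + exp (↑(arg t - θ) * I) = exp (arg t * I) * (2 * cos θ) := by
    rw [two_cos, mul_add, ← exp_add, ← exp_add]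
    push_cast
    ring_nf
  rw [hsum, ← ofReal_cos, hcos]
  conv_lhs => rw [← norm_mul_exp_arg_mul_I t]
  push_cast
  field_simp

theorem Complex.norm_sub_one_lt_norm_add_one {w : ℂ} (hw : 0 < w.re) : ‖w - 1‖ < ‖w + 1‖ := by
  rw [← sq_lt_sq₀ (norm_nonneg _) (norm_nonneg _), Complex.sq_norm, Complex.sq_norm,
    normSq_apply, normSq_apply]
  simp only [sub_re, sub_im, add_re, add_im, one_re, one_im]
  nlinarith

theorem Complex.norm_one_add_div_one_sub_le {w : ℂ} {r : ℝ} (hw : ‖w‖ ≤ r) (hr : r < 1) :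
    ‖(1 + w) / (1 - w)‖ ≤ (1 + r) / (1 - r) := by
  have hsub : 1 - ‖w‖ ≤ ‖1 - w‖ := by simpa using norm_sub_norm_le (1 : ℂ) w
  have hadd : ‖1 + w‖ ≤ 1 + ‖w‖ := by simpa using norm_add_le (1 : ℂ) w
  rw [norm_div]
  calc ‖1 + w‖ / ‖1 - w‖ ≤ (1 + ‖w‖) / (1 - ‖w‖) :=
        div_le_div₀ (by positivity) hadd (by linarith) hsub
    _ ≤ (1 + r) / (1 - r) := by
        rw [div_le_div_iff₀ (by linarith) (by linarith)]; nlinarith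

theorem MemH.norm_le {f : ℂ → ℂ} (hf : MemH f) {z : ℂ} (hz : ‖z‖ < 1) :
    ‖f z‖ ≤ (1 + ‖z‖) / (1 - ‖z‖) := by
  obtain ⟨hdiff, hre, h0⟩ := hf
  have hne : ∀ y ∈ ball (0 : ℂ) 1, f y + 1 ≠ 0 := fun y hy h => by
    have := hre y hy
    rw [eq_neg_of_add_eq_zero_left h] at this
    norm_num at this
  -- the Cayley transform of `f` is a self-map of the disc fixing `0`, so Schwarz applies
  set w : ℂ → ℂ := fun y => (f y - 1) / (f y + 1)
  have hw : DifferentiableOn ℂ w (ball 0 1) :=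
    (hdiff.sub_const 1).div (hdiff.add_const 1) hne
  have hw_maps : MapsTo w (ball 0 1) (closedBall 0 1) := fun y hy => by
    have hlt := norm_sub_one_lt_norm_add_one (hre y hy)
    simpa [w, norm_div, div_le_one₀ ((norm_nonneg _).trans_lt hlt)] using hlt.le
  have hschwarz : ‖w z‖ ≤ ‖z‖ := norm_le_norm_of_mapsTo_ball hw hw_maps (by simp [w, h0]) hz
  have hfz : f z = (1 + w z) / (1 - w z) := by
    have := hne z (mem_ball_zero_iff.mpr hz)
    simp only [w]
    field_simp
    ring
  rw [hfz]
  exact norm_one_add_div_one_sub_le hschwarz hz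

theorem MemH.norm_mul_add_one_le {f g : ℂ → ℂ} (hf : MemH f) (hg : MemH g) {z : ℂ}
    (hz : ‖z‖ < 1) : ‖f z * g z + 1‖ ≤ 2 * (1 + ‖z‖ ^ 2) / (1 - ‖z‖) ^ 2 := by
  have hz' : 0 < 1 - ‖z‖ := by linarith
  calc ‖f z * g z + 1‖ ≤ ‖f z‖ * ‖g z‖ + 1 := by simpa using norm_add_le (f z * g z) 1
    _ ≤ (1 + ‖z‖) / (1 - ‖z‖) * ((1 + ‖z‖) / (1 - ‖z‖)) + 1 := by
        gcongr
        exacts [hf.norm_le hz, hg.norm_le hz]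
    _ = 2 * (1 + ‖z‖ ^ 2) / (1 - ‖z‖) ^ 2 := by
        field_simp
        ring

theorem MemH.norm_mul_add_one_le_of_le {f g : ℂ → ℂ} (hf : MemH f) (hg : MemH g) {s d : ℝ}
    (hd : 0 < d) (hds : d ≤ 1 - |s|) : ‖f s * g s + 1‖ ≤ 2 / d ^ 2 * (s ^ 2 + 1) := by
  have hs : ‖(s : ℂ)‖ = |s| := by simp
  calc ‖f s * g s + 1‖ ≤ 2 * (1 + |s| ^ 2) / (1 - |s|) ^ 2 := by
        simpa only [Complex.norm_real, Real.norm_eq_abs] using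
          hf.norm_mul_add_one_le hg (z := s) (by rw [hs]; linarith)
    _ ≤ 2 * (1 + |s| ^ 2) / d ^ 2 := by gcongr
    _ = 2 / d ^ 2 * (s ^ 2 + 1) := by rw [sq_abs]; ring

theorem LinearMap.IsSymmetric.exists_orthonormalBasis_eigenvectors_of_pairwise_commute
    {𝕜 E ι : Type*} [RCLike 𝕜] [NormedAddCommGroup E] [InnerProductSpace 𝕜 E]
    [FiniteDimensional 𝕜 E] {T : ι → Module.End 𝕜 E} (hT : ∀ i, (T i).IsSymmetric)
    (hC : Pairwise (Commute on T)) :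
    ∃ (b : OrthonormalBasis (Fin (finrank 𝕜 E)) 𝕜 E) (χ : Fin (finrank 𝕜 E) → ι → 𝕜),
      ∀ j i, T i (b j) = χ j i • b j := by
  classical
  set V : (ι → 𝕜) → Submodule 𝕜 E := fun α => ⨅ i, End.eigenspace (T i) (α i)
  have hV : DirectSum.IsInternal V := directSum_isInternal_of_pairwise_commute hT hC
  -- only the finitely many nonzero joint eigenspaces can index an orthonormal basis
  have : Fintype {α // V α ≠ ⊥} := hV.submodule_iSupIndep.fintypeNeBotOfFiniteDimensional
  set V' : {α // V α ≠ ⊥} → Submodule 𝕜 E := fun α => V α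
  have hV'orth : OrthogonalFamily 𝕜 (fun α => V' α) fun α => (V' α).subtypeₗᵢ :=
    fun _ _ hαβ => orthogonalFamily_iInf_eigenspaces hT (Subtype.coe_injective.ne hαβ)
  have hV' : DirectSum.IsInternal V' := by
    rw [hV'orth.isInternal_iff, Submodule.orthogonal_eq_bot_iff, eq_top_iff,
      ← hV.submodule_iSup_eq_top]
    refine iSup_le fun α => ?_
    by_cases hα : V α = ⊥
    · simp [hα]
    · exact le_iSup V' ⟨α, hα⟩
  refine ⟨hV'.subordinateOrthonormalBasis rfl hV'orth,
    fun j => (hV'.subordinateOrthonormalBasisIndex rfl j hV'orth).1, fun j i => ?_⟩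
  exact End.mem_eigenspace_iff.mp <| (Submodule.mem_iInf _).mp
    (hV'.subordinateOrthonormalBasis_subordinate rfl j hV'orth) i

section

variable {𝕜 m ι : Type*} [RCLike 𝕜] [Fintype m] [DecidableEq m]

theorem Matrix.eq_conjStarAlgAut_diagonal_of_mul_eq (W : unitaryGroup m 𝕜) {M : Matrix m m 𝕜}
    {d : m → 𝕜} (h : M * W = W * diagonal d) : M = conjStarAlgAut 𝕜 _ W (diagonal d) := by
  rw [conjStarAlgAut_apply, ← h, mul_assoc, Unitary.mul_star_self_of_mem W.2, mul_one]

theorem Matrix.exists_unitary_diagonal_of_pairwise_commute {T : ι → Matrix m m 𝕜}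
    (hT : ∀ i, (T i).IsHermitian) (hC : Pairwise (Commute on T)) :
    ∃ (W : unitaryGroup m 𝕜) (χ : ι → m → 𝕜), ∀ i, T i = conjStarAlgAut 𝕜 _ W (diagonal (χ i)) := by
  obtain ⟨b, χ, hb⟩ :=
    LinearMap.IsSymmetric.exists_orthonormalBasis_eigenvectors_of_pairwise_commute
      (T := fun i => toEuclideanLin (T i)) (fun i => isSymmetric_toEuclideanLin_iff.mpr (hT i))
      fun i j hij => (hC hij).map (toLpLinAlgEquiv 2 (R := 𝕜) (n := m))
  let e : Fin (finrank 𝕜 (EuclideanSpace 𝕜 m)) ≃ m := Fintype.equivOfCardEq (by simp)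
  let b' := b.reindex e
  refine ⟨⟨_, (EuclideanSpace.basisFun m 𝕜).toMatrix_orthonormalBasis_mem_unitary b'⟩,
    fun i k => χ (e.symm k) i, fun i => eq_conjStarAlgAut_diagonal_of_mul_eq _ ?_⟩
  ext k l
  have := congrArg (fun v => v k) (hb (e.symm l) i)
  rw [mul_diagonal]
  simpa [Matrix.mul_apply, b', Basis.toMatrix_apply, mulVec, dotProduct, mul_comm] using this

theorem Matrix.IsHermitian.exists_unitary_diagonal_of_commute {A X : Matrix m m ℂ}
    (hA : A.IsHermitian) (hX : IsStarNormal X) (hAX : Commute A X) :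
    ∃ (W : unitaryGroup m ℂ) (a x : m → ℂ),
      A = conjStarAlgAut ℂ _ W (diagonal a) ∧ X = conjStarAlgAut ℂ _ W (diagonal x) := by
  have hAX' : Commute A (star X) := by simpa [hA.star_eq] using hAX.star_star
  have hAre : Commute A (ℜ X) := by
    rw [realPart_apply_coe]; exact (hAX.add_right hAX').smul_right _
  have hAim : Commute A (ℑ X) := by
    rw [imaginaryPart_apply_coe]; exact ((hAX.sub_right hAX').smul_right _).smul_right _
  have hreim : Commute (ℜ X : Matrix m m ℂ) (ℑ X) :=
    isStarNormal_iff_commute_realPart_imaginaryPart.mp hX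
  obtain ⟨W, χ, hχ⟩ := exists_unitary_diagonal_of_pairwise_commute (T := ![A, ℜ X, ℑ X])
    (fun i => by fin_cases i <;> simp [hA, (ℜ X).2.isHermitian, (ℑ X).2.isHermitian])
    (fun i j _ => by fin_cases i <;> fin_cases j <;> simp_all [Function.onFun, Commute.symm_iff])
  refine ⟨W, χ 0, χ 1 + Complex.I • χ 2, hχ 0, ?_⟩
  calc X = ℜ X + Complex.I • ℑ X := (realPart_add_I_smul_imaginaryPart X).symm
    _ = conjStarAlgAut ℂ _ W (diagonal (χ 1) + Complex.I • diagonal (χ 2)) := by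
      rw [map_add, map_smul, ← hχ 1, ← hχ 2]; rfl
    _ = conjStarAlgAut ℂ _ W (diagonal (χ 1 + Complex.I • χ 2)) := by
      rw [← diagonal_smul, diagonal_add]; rfl

theorem Matrix.mul_diagonal_comp_eq_diagonal_comp_mul {R : Type*} [CommRing R] [IsDomain R]
    {Z : Matrix m m R} {d e : m → R} (h : Z * diagonal d = diagonal e * Z) (φ : R → R) :
    Z * diagonal (φ ∘ d) = diagonal (φ ∘ e) * Z := by
  ext i j
  have hij : Z i j * d j = e i * Z i j := by simpa using congrFun₂ h i j
  by_cases hZ : Z i j = 0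
  · simp [hZ]
  · have : d j = e i := mul_left_cancel₀ hZ (hij.trans (mul_comm _ _))
    simp [this, mul_comm]

theorem Matrix.conjStarAlgAut_diagonal_comp_eq {U W : unitaryGroup m 𝕜} {d e : m → 𝕜}
    (h : conjStarAlgAut 𝕜 _ U (diagonal d) = conjStarAlgAut 𝕜 _ W (diagonal e)) (φ : 𝕜 → 𝕜) :
    conjStarAlgAut 𝕜 _ U (diagonal (φ ∘ d)) = conjStarAlgAut 𝕜 _ W (diagonal (φ ∘ e)) := by
  obtain ⟨u, hu⟩ := U
  obtain ⟨w, hw⟩ := W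
  simp only [conjStarAlgAut_apply] at h ⊢
  have hZ : (star w * u) * diagonal d = diagonal e * (star w * u) := by
    calc _ = star w * (u * diagonal d * star u) * u := by
          simp only [mul_assoc, Unitary.star_mul_self_of_mem hu, mul_one]
      _ = diagonal e * (star w * u) := by
          rw [h]; simp only [← mul_assoc, Unitary.star_mul_self_of_mem hw, one_mul]
  calc u * diagonal (φ ∘ d) * star u = w * ((star w * u) * diagonal (φ ∘ d)) * star u := by
        simp only [← mul_assoc, Unitary.mul_star_self_of_mem hw, one_mul]
    _ = w * diagonal (φ ∘ e) * star w := by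
        rw [mul_diagonal_comp_eq_diagonal_comp_mul hZ]
        simp only [mul_assoc, Unitary.mul_star_self_of_mem hu, mul_one]

theorem Matrix.IsHermitian.exists_eq_eigenvalues_comp {A : Matrix m m 𝕜} (hA : A.IsHermitian)
    {W : unitaryGroup m 𝕜} {a : m → 𝕜} (h : A = conjStarAlgAut 𝕜 _ W (diagonal a)) :
    ∃ σ : m → m, a = RCLike.ofReal ∘ hA.eigenvalues ∘ σ := by
  have ha : ∀ j, ∃ i, (hA.eigenvalues i : 𝕜) = a j := fun j => by
    simpa [hA.spectrum_eq_image_range] using (show a j ∈ spectrum 𝕜 A by simp [h])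
  choose σ hσ using ha
  exact ⟨σ, funext fun j => (hσ j).symm⟩

theorem Matrix.diagonal_mem_unitaryGroup {u : m → 𝕜} (hu : ∀ i, ‖u i‖ = 1) :
    diagonal u ∈ unitaryGroup m 𝕜 := by
  rw [mem_unitaryGroup_iff', star_eq_conjTranspose, diagonal_conjTranspose, diagonal_mul_diagonal,
    ← diagonal_one]
  congr 1
  funext i
  simp [RCLike.conj_mul, hu i]

variable {N : Matrix m m ℂ → ℝ}

theorem IsUnitarilyInvariantNorm.map_unitary_mul (hN : IsUnitarilyInvariantNorm N)
    (U : unitaryGroup m ℂ) (M : Matrix m m ℂ) : N (U * M) = N M := by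
  simpa using hN.2.2.2 U 1 M

theorem IsUnitarilyInvariantNorm.map_conjStarAlgAut (hN : IsUnitarilyInvariantNorm N)
    (U : unitaryGroup m ℂ) (M : Matrix m m ℂ) : N (conjStarAlgAut ℂ _ U M) = N M := by
  rw [conjStarAlgAut_apply, ← Unitary.coe_star]
  exact hN.2.2.2 U (star U) M

theorem IsUnitarilyInvariantNorm.map_diagonal_le (hN : IsUnitarilyInvariantNorm N)
    {t : m → ℂ} {r : m → ℝ} (h : ∀ i, ‖t i‖ ≤ r i) :
    N (diagonal t) ≤ N (diagonal fun i => (r i : ℂ)) := by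
  choose u v hu hv huv using fun i => exists_norm_eq_one_two_mul_eq (h i)
  set D : Matrix m m ℂ := diagonal fun i => (r i : ℂ)
  have hsplit : (2 : ℂ) • diagonal t = diagonal u * D + diagonal v * D := by
    rw [← diagonal_smul, diagonal_mul_diagonal, diagonal_mul_diagonal, diagonal_add]
    congr 1
    funext i
    simp only [Pi.smul_apply, smul_eq_mul, huv]
    ring
  have := hN.2.2.1 (diagonal u * D) (diagonal v * D)
  rw [← hsplit, hN.2.1, hN.map_unitary_mul ⟨_, diagonal_mem_unitaryGroup hu⟩,
    hN.map_unitary_mul ⟨_, diagonal_mem_unitaryGroup hv⟩] at this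
  norm_num at this
  linarith

theorem IsUnitarilyInvariantNorm.map_diagonal_le_mul (hN : IsUnitarilyInvariantNorm N)
    {t : m → ℂ} {r : m → ℝ} {c : ℝ} (hc : 0 ≤ c) (h : ∀ i, ‖t i‖ ≤ c * r i) :
    N (diagonal t) ≤ c * N (diagonal fun i => (r i : ℂ)) := by
  have hcr : (fun i => ((c * r i : ℝ) : ℂ)) = (c : ℂ) • fun i => (r i : ℂ) := by
    funext i
    simp
  refine (hN.map_diagonal_le h).trans_eq ?_
  rw [hcr, diagonal_smul, hN.2.1, Complex.norm_real, Real.norm_of_nonneg hc]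

end

theorem herFun_eq_conjStarAlgAut {n : ℕ} {A : Matrix (Fin n) (Fin n) ℂ} (hA : A.IsHermitian)
    {W : unitaryGroup (Fin n) ℂ} {a : Fin n → ℂ} (h : A = conjStarAlgAut ℂ _ W (diagonal a))
    (φ : ℂ → ℂ) : herFun hA φ = conjStarAlgAut ℂ _ W (diagonal (φ ∘ a)) :=
  conjStarAlgAut_diagonal_comp_eq (hA.spectral_theorem.symm.trans h) φ

theorem matAbs_eq_conjStarAlgAut {n : ℕ} {X : Matrix (Fin n) (Fin n) ℂ}
    {W : unitaryGroup (Fin n) ℂ} {x : Fin n → ℂ} (h : X = conjStarAlgAut ℂ _ W (diagonal x)) :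
    matAbs X = conjStarAlgAut ℂ _ W (diagonal fun j => (‖x j‖ : ℂ)) := by
  have hXX : Xᴴ * X = conjStarAlgAut ℂ _ W (diagonal fun j => ((‖x j‖ ^ 2 : ℝ) : ℂ)) := by
    rw [h, ← star_eq_conjTranspose, ← map_star, ← map_mul, star_eq_conjTranspose,
      diagonal_conjTranspose, diagonal_mul_diagonal]
    congr 2
    funext j
    simp [conj_mul']
  have key := conjStarAlgAut_diagonal_comp_eq
    ((posSemidef_conjTranspose_mul_self X).1.spectral_theorem.symm.trans hXX)
    (fun z => (√z.re : ℂ))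
  have hsqrt : (fun z : ℂ => (√z.re : ℂ)) ∘ (fun j => ((‖x j‖ ^ 2 : ℝ) : ℂ)) =
      fun j => (‖x j‖ : ℂ) := by
    funext j
    simp only [Function.comp_apply, ofReal_re, Real.sqrt_sq (norm_nonneg _)]
  rw [hsqrt] at key
  exact key

theorem dDist_le {n : ℕ} {A : Matrix (Fin n) (Fin n) ℂ} (hA : A.IsHermitian) (i : Fin n) :
    dDist hA ≤ 1 - |hA.eigenvalues i| :=
  ciInf_le (Set.finite_range _).bddBelow i

theorem dDist_pos {n : ℕ} [Nonempty (Fin n)] {A : Matrix (Fin n) (Fin n) ℂ} (hA : A.IsHermitian)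
    (hAspec : ∀ i, |hA.eigenvalues i| < 1) : 0 < dDist hA := by
  obtain ⟨i, hi⟩ := exists_eq_ciInf_of_finite (f := fun i => 1 - |hA.eigenvalues i|)
  rw [dDist, ← hi]
  linarith [hAspec i]

theorem herFun_mul_mul_herFun_add_eq {n : ℕ} {A X : Matrix (Fin n) (Fin n) ℂ}
    (hA : A.IsHermitian) {W : unitaryGroup (Fin n) ℂ} {a x : Fin n → ℂ}
    (hAW : A = conjStarAlgAut ℂ _ W (diagonal a)) (hXW : X = conjStarAlgAut ℂ _ W (diagonal x))
    (f g : ℂ → ℂ) : herFun hA f * X * herFun hA g + X =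
      conjStarAlgAut ℂ _ W (diagonal fun j => (f (a j) * g (a j) + 1) * x j) := by
  rw [herFun_eq_conjStarAlgAut hA hAW, herFun_eq_conjStarAlgAut hA hAW, hXW, ← map_mul,
    ← map_mul, ← map_add, diagonal_mul_diagonal, diagonal_mul_diagonal, diagonal_add]
  congr 2
  funext j
  simp only [Function.comp_apply]
  ring

theorem mul_matAbs_mul_add_matAbs_eq {n : ℕ} {A X : Matrix (Fin n) (Fin n) ℂ}
    {W : unitaryGroup (Fin n) ℂ} {s : Fin n → ℝ} {x : Fin n → ℂ}
    (hAW : A = conjStarAlgAut ℂ _ W (diagonal fun j => (s j : ℂ)))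
    (hXW : X = conjStarAlgAut ℂ _ W (diagonal x)) : A * matAbs X * A + matAbs X =
      conjStarAlgAut ℂ _ W (diagonal fun j => (((s j ^ 2 + 1) * ‖x j‖ : ℝ) : ℂ)) := by
  rw [matAbs_eq_conjStarAlgAut hXW, hAW, ← map_mul, ← map_mul, ← map_add,
    diagonal_mul_diagonal, diagonal_mul_diagonal, diagonal_add]
  congr 2
  funext j
  push_cast
  ring

theorem stmt3_general {n : ℕ}
    {A : Matrix (Fin n) (Fin n) ℂ} (hA : A.IsHermitian)
    (hAspec : ∀ i, |hA.eigenvalues i| < 1)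
    {f g : ℂ → ℂ} (hf : MemH f) (hg : MemH g)
    (X : Matrix (Fin n) (Fin n) ℂ) (hX : Xᴴ * X = X * Xᴴ) (hAX : A * X = X * A)
    (N : Matrix (Fin n) (Fin n) ℂ → ℝ) (hN : IsUnitarilyInvariantNorm N) :
    N (herFun hA f * X * herFun hA g + X) ≤
      (2 / dDist hA ^ 2) * N (A * matAbs X * A + matAbs X) := by
  obtain ⟨W, a, x, hAW, hXW⟩ := hA.exists_unitary_diagonal_of_commute ⟨hX⟩ hAX
  obtain ⟨σ, hσ⟩ := hA.exists_eq_eigenvalues_comp hAW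
  set s := hA.eigenvalues ∘ σ
  -- `hσ` is stated with `RCLike.ofReal`; restate it with the coercion `ℝ → ℂ`
  obtain rfl : a = fun j => (s j : ℂ) := hσ
  rw [herFun_mul_mul_herFun_add_eq hA hAW hXW, mul_matAbs_mul_add_matAbs_eq hAW hXW,
    hN.map_conjStarAlgAut, hN.map_conjStarAlgAut]
  refine hN.map_diagonal_le_mul (by positivity) fun j => ?_
  have : Nonempty (Fin n) := ⟨j⟩
  rw [norm_mul, ← mul_assoc]
  exact mul_le_mul_of_nonneg_right (hf.norm_mul_add_one_le_of_le hg
    (dDist_pos hA hAspec) (dDist_le hA (σ j))) (norm_nonneg _)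

/-- **Corollary 2.3 (first inequality), Hermitian matrix case.** -/
theorem stmt3 {n : ℕ} (hn : 1 ≤ n)
    {A : Matrix (Fin n) (Fin n) ℂ} (hA : A.IsHermitian)
    (hAspec : ∀ i, |hA.eigenvalues i| < 1)
    {f g : ℂ → ℂ} (hf : MemH f) (hg : MemH g)
    (X : Matrix (Fin n) (Fin n) ℂ) (hX : Xᴴ * X = X * Xᴴ) (hAX : A * X = X * A)
    (N : Matrix (Fin n) (Fin n) ℂ → ℝ) (hN : IsUnitarilyInvariantNorm N) :
    N (herFun hA f * X * herFun hA g + X) ≤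
      (2 / dDist hA ^ 2) * N (A * matAbs X * A + matAbs X) :=
  stmt3_general hA hAspec hf hg X hX hAX N hN
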